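/- arXiv:math/0611171 — 3 statements merged into one kernel-verified Lean document; each statement's English description precedes it below -/
import Mathlib

section
/- Let γ : [a,b] → ℂ be a C¹ curve avoiding z ∈ ℂ, and let n₁, n₂ ∈ ℕ, with a ≤ a₁ < b₁ ≤ b and γ(a₁) ≠ γ(b₁). Then 1/((γ(a₁)-z)^{n₁+1}(γ(b₁)-z)^{n₂+1}) = ∫_{a₁}^{b₁} ((n₁+n₂+1)!/(n₁!·n₂!)) · ((γ(t)-γ(a₁))^{n₂}(γ(b₁)-γ(t))^{n₁}/(γ(b₁)-γ(a₁))^{n₁+n₂+1}) · γ'(t)/(γ(t)-z)^{n₁+n₂+2} dt. -/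
open Finset

noncomputable def auxG (A B z : ℂ) (n₁ n₂ : ℕ) : ℂ → ℂ := fun w =>
  ∑ k ∈ Finset.range (n₁ + 1),
    (((n₁ + n₂ + 1).factorial : ℂ) * (B - z) ^ k) /
        (((n₁ - k).factorial : ℂ) * ((n₂ + 1 + k).factorial : ℂ) *
          (B - A) ^ (n₁ + n₂ + 1) * (A - z) ^ (k + 1)) *
      ((w - A) ^ (n₂ + 1 + k) * (B - w) ^ (n₁ - k) / (w - z) ^ (n₁ + n₂ + 1))

noncomputable def auxT (A B z : ℂ) (n₁ n₂ : ℕ) (w : ℂ) (k : ℕ) : ℂ :=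
  if k ≤ n₁ then
    (((n₁ + n₂ + 1).factorial : ℂ) * (B - z) ^ k * (w - A) ^ (n₂ + k) * (B - w) ^ (n₁ - k)) /
      (((n₁ - k).factorial : ℂ) * ((n₂ + k).factorial : ℂ) *
        (B - A) ^ (n₁ + n₂ + 1) * (A - z) ^ k * (w - z) ^ (n₁ + n₂ + 2))
  else 0

lemma auxT_of_le (A B z : ℂ) (n₁ n₂ : ℕ) (w : ℂ) (k : ℕ) (h : k ≤ n₁) :
    auxT A B z n₁ n₂ w k =
    (((n₁ + n₂ + 1).factorial : ℂ) * (B - z) ^ k * (w - A) ^ (n₂ + k) * (B - w) ^ (n₁ - k)) /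
      (((n₁ - k).factorial : ℂ) * ((n₂ + k).factorial : ℂ) *
        (B - A) ^ (n₁ + n₂ + 1) * (A - z) ^ k * (w - z) ^ (n₁ + n₂ + 2)) := if_pos h

lemma auxT_of_gt (A B z : ℂ) (n₁ n₂ : ℕ) (w : ℂ) (k : ℕ) (h : n₁ < k) :
    auxT A B z n₁ n₂ w k = 0 := if_neg (by omega)

set_option maxHeartbeats 2000000 in
lemma auxG_hasDerivAt (A B z : ℂ) (n₁ n₂ : ℕ) (hu : A - z ≠ 0) (hv : B - z ≠ 0)
    (hBA : B - A ≠ 0) (w : ℂ) (hw : w - z ≠ 0) :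
    HasDerivAt (auxG A B z n₁ n₂)
      ((((n₁ + n₂ + 1).factorial : ℂ) / ((n₁.factorial : ℂ) * (n₂.factorial : ℂ))) *
        ((w - A) ^ n₂ * (B - w) ^ n₁ / (B - A) ^ (n₁ + n₂ + 1)) *
          (1 / (w - z) ^ (n₁ + n₂ + 2))) w := by
  have key : HasDerivAt (auxG A B z n₁ n₂)
      (∑ k ∈ Finset.range (n₁ + 1),
        (auxT A B z n₁ n₂ w k - auxT A B z n₁ n₂ w (k + 1))) w := by
    unfold auxG
    refine HasDerivAt.fun_sum fun k hk => ?_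
    have hk' : k ≤ n₁ := by
      simpa [Nat.lt_succ_iff] using hk
    have h1 := ((hasDerivAt_id w).sub_const A).pow (n₂ + 1 + k)
    have h2 := ((hasDerivAt_id w).const_sub B).pow (n₁ - k)
    have h3 := ((hasDerivAt_id w).sub_const z).pow (n₁ + n₂ + 1)
    have h4 := ((h1.mul h2).div h3 (pow_ne_zero _ hw)).const_mul
      ((((n₁ + n₂ + 1).factorial : ℂ) * (B - z) ^ k) /
        (((n₁ - k).factorial : ℂ) * ((n₂ + 1 + k).factorial : ℂ) *
          (B - A) ^ (n₁ + n₂ + 1) * (A - z) ^ (k + 1)))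
    refine h4.congr_deriv ?_
    symm
    simp only [id_eq, Pi.pow_apply, Pi.mul_apply, Pi.div_apply]
    rcases hk'.eq_or_lt with rfl | hlt
    · -- last term
      rw [auxT_of_le _ _ _ _ _ _ _ le_rfl, auxT_of_gt _ _ _ _ _ _ _ (Nat.lt_succ_self _),
        sub_zero]
      simp only [Nat.sub_self, Nat.zero_sub, Nat.factorial_zero, pow_zero, Nat.cast_zero,
        mul_one, one_mul, zero_mul, mul_zero, neg_zero, add_zero]
      rw [show n₂ + 1 + k - 1 = n₂ + k by omega, show k + n₂ + 1 - 1 = k + n₂ by omega,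
        show n₂ + 1 + k = n₂ + k + 1 by omega, Nat.factorial_succ (n₂ + k)]
      rw [show k + n₂ + 2 = k + n₂ + 1 + 1 by omega]
      simp only [pow_succ]
      rw [div_mul_div_comm, div_eq_div_iff (by
      repeat' apply mul_ne_zero
      all_goals
        first
            | exact Nat.cast_ne_zero.mpr one_ne_zero
            | exact one_ne_zero
            | exact Nat.cast_ne_zero.mpr (Nat.factorial_ne_zero _)
            | exact Nat.cast_ne_zero.mpr (Nat.mul_ne_zero (by omega) (Nat.factorial_ne_zero _))
            | exact pow_ne_zero _ hBA
            | exact pow_ne_zero _ hu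
            | exact pow_ne_zero _ hv
            | exact pow_ne_zero _ hw
            | exact pow_ne_zero _ (pow_ne_zero _ hw)
            | exact hu
            | exact hv
            | exact hw
            | exact hBA) (by
      repeat' apply mul_ne_zero
      all_goals
        first
            | exact Nat.cast_ne_zero.mpr one_ne_zero
            | exact one_ne_zero
            | exact Nat.cast_ne_zero.mpr (Nat.factorial_ne_zero _)
            | exact Nat.cast_ne_zero.mpr (Nat.mul_ne_zero (by omega) (Nat.factorial_ne_zero _))
            | exact pow_ne_zero _ hBA
            | exact pow_ne_zero _ hu
            | exact pow_ne_zero _ hv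
            | exact pow_ne_zero _ hw
            | exact pow_ne_zero _ (pow_ne_zero _ hw)
            | exact hu
            | exact hv
            | exact hw
            | exact hBA)]
      rw [show A - z = w - z - (w - A) by ring, show B - z = w - z + (B - w) by ring]
      generalize B - w = q
      generalize w - A = p
      generalize w - z = x
      push_cast
      ring
    · -- middle terms
      obtain ⟨j, rfl⟩ : ∃ j, n₁ = k + j + 1 := ⟨n₁ - k - 1, by omega⟩
      rw [auxT_of_le _ _ _ _ _ _ _ (by omega), auxT_of_le _ _ _ _ _ _ _ (by omega)]
      rw [show k + j + 1 - k = j + 1 by omega, show k + j + 1 - (k + 1) = j by omega,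
        show j + 1 - 1 = j by omega,
        show n₂ + 1 + k - 1 = n₂ + k by omega,
        show k + j + 1 + n₂ + 1 - 1 = k + j + 1 + n₂ by omega,
        show n₂ + (k + 1) = n₂ + k + 1 by omega,
        show n₂ + 1 + k = n₂ + k + 1 by omega,
        Nat.factorial_succ (n₂ + k), Nat.factorial_succ j]
      rw [show k + j + 1 + n₂ + 2 = k + j + 1 + n₂ + 1 + 1 by omega]
      simp only [pow_succ]
      rw [div_sub_div _ _ (by
      repeat' apply mul_ne_zero
      all_goals
        first
            | exact Nat.cast_ne_zero.mpr one_ne_zero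
            | exact one_ne_zero
            | exact Nat.cast_ne_zero.mpr (Nat.factorial_ne_zero _)
            | exact Nat.cast_ne_zero.mpr (Nat.mul_ne_zero (by omega) (Nat.factorial_ne_zero _))
            | exact pow_ne_zero _ hBA
            | exact pow_ne_zero _ hu
            | exact pow_ne_zero _ hv
            | exact pow_ne_zero _ hw
            | exact pow_ne_zero _ (pow_ne_zero _ hw)
            | exact hu
            | exact hv
            | exact hw
            | exact hBA) (by
      repeat' apply mul_ne_zero
      all_goals
        first
            | exact Nat.cast_ne_zero.mpr one_ne_zero
            | exact one_ne_zero
            | exact Nat.cast_ne_zero.mpr (Nat.factorial_ne_zero _)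
            | exact Nat.cast_ne_zero.mpr (Nat.mul_ne_zero (by omega) (Nat.factorial_ne_zero _))
            | exact pow_ne_zero _ hBA
            | exact pow_ne_zero _ hu
            | exact pow_ne_zero _ hv
            | exact pow_ne_zero _ hw
            | exact pow_ne_zero _ (pow_ne_zero _ hw)
            | exact hu
            | exact hv
            | exact hw
            | exact hBA)]
      rw [div_mul_div_comm, div_eq_div_iff (by
      repeat' apply mul_ne_zero
      all_goals
        first
            | exact Nat.cast_ne_zero.mpr one_ne_zero
            | exact one_ne_zero
            | exact Nat.cast_ne_zero.mpr (Nat.factorial_ne_zero _)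
            | exact Nat.cast_ne_zero.mpr (Nat.mul_ne_zero (by omega) (Nat.factorial_ne_zero _))
            | exact pow_ne_zero _ hBA
            | exact pow_ne_zero _ hu
            | exact pow_ne_zero _ hv
            | exact pow_ne_zero _ hw
            | exact pow_ne_zero _ (pow_ne_zero _ hw)
            | exact hu
            | exact hv
            | exact hw
            | exact hBA) (by
      repeat' apply mul_ne_zero
      all_goals
        first
            | exact Nat.cast_ne_zero.mpr one_ne_zero
            | exact one_ne_zero
            | exact Nat.cast_ne_zero.mpr (Nat.factorial_ne_zero _)
            | exact Nat.cast_ne_zero.mpr (Nat.mul_ne_zero (by omega) (Nat.factorial_ne_zero _))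
            | exact pow_ne_zero _ hBA
            | exact pow_ne_zero _ hu
            | exact pow_ne_zero _ hv
            | exact pow_ne_zero _ hw
            | exact pow_ne_zero _ (pow_ne_zero _ hw)
            | exact hu
            | exact hv
            | exact hw
            | exact hBA)]
      rw [show A - z = w - z - (w - A) by ring, show B - z = w - z + (B - w) by ring]
      generalize B - w = q
      generalize w - A = p
      generalize w - z = x
      push_cast
      ring
  rw [Finset.sum_range_sub' (auxT A B z n₁ n₂ w) (n₁ + 1)] at key
  rw [auxT_of_le _ _ _ _ _ _ _ (Nat.zero_le _), auxT_of_gt _ _ _ _ _ _ _ (Nat.lt_succ_self _),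
    sub_zero] at key
  convert key using 1
  simp only [pow_zero, Nat.sub_zero, add_zero, mul_one, one_mul]
  rw [div_mul_div_comm, div_mul_div_comm, div_eq_div_iff (by
      repeat' apply mul_ne_zero
      all_goals
        first
            | exact Nat.cast_ne_zero.mpr one_ne_zero
            | exact one_ne_zero
            | exact Nat.cast_ne_zero.mpr (Nat.factorial_ne_zero _)
            | exact Nat.cast_ne_zero.mpr (Nat.mul_ne_zero (by omega) (Nat.factorial_ne_zero _))
            | exact pow_ne_zero _ hBA
            | exact pow_ne_zero _ hu
            | exact pow_ne_zero _ hv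
            | exact pow_ne_zero _ hw
            | exact pow_ne_zero _ (pow_ne_zero _ hw)
            | exact hu
            | exact hv
            | exact hw
            | exact hBA) (by
      repeat' apply mul_ne_zero
      all_goals
        first
            | exact Nat.cast_ne_zero.mpr one_ne_zero
            | exact one_ne_zero
            | exact Nat.cast_ne_zero.mpr (Nat.factorial_ne_zero _)
            | exact Nat.cast_ne_zero.mpr (Nat.mul_ne_zero (by omega) (Nat.factorial_ne_zero _))
            | exact pow_ne_zero _ hBA
            | exact pow_ne_zero _ hu
            | exact pow_ne_zero _ hv
            | exact pow_ne_zero _ hw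
            | exact pow_ne_zero _ (pow_ne_zero _ hw)
            | exact hu
            | exact hv
            | exact hw
            | exact hBA)]
  push_cast
  ring

lemma auxG_left (A B z : ℂ) (n₁ n₂ : ℕ) : auxG A B z n₁ n₂ A = 0 := by
  unfold auxG
  refine Finset.sum_eq_zero fun k _ => ?_
  rw [sub_self, zero_pow (by omega : n₂ + 1 + k ≠ 0)]
  simp

lemma auxG_right (A B z : ℂ) (n₁ n₂ : ℕ) (hu : A - z ≠ 0) (hv : B - z ≠ 0)
    (hBA : B - A ≠ 0) :
    auxG A B z n₁ n₂ B = 1 / ((A - z) ^ (n₁ + 1) * (B - z) ^ (n₂ + 1)) := by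
  unfold auxG
  rw [Finset.sum_eq_single_of_mem n₁ (Finset.self_mem_range_succ n₁)]
  · simp only [Nat.sub_self, Nat.factorial_zero, pow_zero, one_mul, mul_one, Nat.cast_one]
    rw [show n₂ + 1 + n₁ = n₁ + n₂ + 1 by omega]
    have hvn : (B - z) ^ (n₁ + n₂ + 1) = (B - z) ^ n₁ * (B - z) ^ (n₂ + 1) := by
      ring
    rw [hvn]
    rw [div_mul_div_comm, div_eq_div_iff (by
      repeat' apply mul_ne_zero
      all_goals
        first
            | exact Nat.cast_ne_zero.mpr one_ne_zero
            | exact one_ne_zero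
            | exact Nat.cast_ne_zero.mpr (Nat.factorial_ne_zero _)
            | exact Nat.cast_ne_zero.mpr (Nat.mul_ne_zero (by omega) (Nat.factorial_ne_zero _))
            | exact pow_ne_zero _ hBA
            | exact pow_ne_zero _ hu
            | exact pow_ne_zero _ hv
            | exact pow_ne_zero _ hw
            | exact pow_ne_zero _ (pow_ne_zero _ hw)
            | exact hu
            | exact hv
            | exact hw
            | exact hBA) (by
      exact mul_ne_zero (pow_ne_zero _ hu) (pow_ne_zero _ hv))]
    push_cast
    ring
  · intro k hk hne
    rw [sub_self, zero_pow (by simp only [Finset.mem_range] at hk; omega : n₁ - k ≠ 0)]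
    simp

theorem stmt_6 (a b a₁ b₁ : ℝ) (hab : a ≤ a₁) (ha₁b₁ : a₁ < b₁) (hb₁b : b₁ ≤ b)
    (γ γ' : ℝ → ℂ)
    (hderiv : ∀ t ∈ Set.Icc a b, HasDerivAt γ (γ' t) t)
    (hcont : ContinuousOn γ' (Set.Icc a b))
    (z : ℂ) (hz : ∀ t ∈ Set.Icc a₁ b₁, γ t ≠ z)
    (hends : γ a₁ ≠ γ b₁) (n₁ n₂ : ℕ) :
    1 / ((γ a₁ - z) ^ (n₁ + 1) * (γ b₁ - z) ^ (n₂ + 1)) =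
      ∫ t in a₁..b₁,
        (((n₁ + n₂ + 1).factorial : ℂ) / ((n₁.factorial : ℂ) * (n₂.factorial : ℂ))) *
          ((γ t - γ a₁) ^ n₂ * (γ b₁ - γ t) ^ n₁ / (γ b₁ - γ a₁) ^ (n₁ + n₂ + 1)) *
            (γ' t / (γ t - z) ^ (n₁ + n₂ + 2)) := by
  have hu : γ a₁ - z ≠ 0 := sub_ne_zero.mpr (hz a₁ ⟨le_rfl, ha₁b₁.le⟩)
  have hv : γ b₁ - z ≠ 0 := sub_ne_zero.mpr (hz b₁ ⟨ha₁b₁.le, le_rfl⟩)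
  have hBA : γ b₁ - γ a₁ ≠ 0 := sub_ne_zero.mpr (Ne.symm hends)
  have hsub : Set.Icc a₁ b₁ ⊆ Set.Icc a b := Set.Icc_subset_Icc hab hb₁b
  have huIcc : Set.uIcc a₁ b₁ = Set.Icc a₁ b₁ := Set.uIcc_of_le ha₁b₁.le
  have hγc : ContinuousOn γ (Set.Icc a₁ b₁) := fun t ht =>
    ((hderiv t (hsub ht)).continuousAt).continuousWithinAt
  have hγ'c : ContinuousOn γ' (Set.Icc a₁ b₁) := hcont.mono hsub
  have hder : ∀ t ∈ Set.uIcc a₁ b₁,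
      HasDerivAt (fun t => auxG (γ a₁) (γ b₁) z n₁ n₂ (γ t))
        ((((n₁ + n₂ + 1).factorial : ℂ) / ((n₁.factorial : ℂ) * (n₂.factorial : ℂ))) *
          ((γ t - γ a₁) ^ n₂ * (γ b₁ - γ t) ^ n₁ / (γ b₁ - γ a₁) ^ (n₁ + n₂ + 1)) *
            (γ' t / (γ t - z) ^ (n₁ + n₂ + 2))) t := by
    intro t ht
    rw [huIcc] at ht
    have h := (auxG_hasDerivAt (γ a₁) (γ b₁) z n₁ n₂ hu hv hBA (γ t)
      (sub_ne_zero.mpr (hz t ht))).comp t (hderiv t (hsub ht))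
    refine h.congr_deriv ?_
    ring
  have hii : IntervalIntegrable (fun t =>
      (((n₁ + n₂ + 1).factorial : ℂ) / ((n₁.factorial : ℂ) * (n₂.factorial : ℂ))) *
        ((γ t - γ a₁) ^ n₂ * (γ b₁ - γ t) ^ n₁ / (γ b₁ - γ a₁) ^ (n₁ + n₂ + 1)) *
          (γ' t / (γ t - z) ^ (n₁ + n₂ + 2))) MeasureTheory.volume a₁ b₁ := by
    apply ContinuousOn.intervalIntegrable
    rw [huIcc]
    refine ContinuousOn.mul (ContinuousOn.mul continuousOn_const ?_) ?_
    · exact (((hγc.sub continuousOn_const).pow n₂).mul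
        ((continuousOn_const.sub hγc).pow n₁)).div_const _
    · exact hγ'c.div ((hγc.sub continuousOn_const).pow (n₁ + n₂ + 2))
        (fun t ht => pow_ne_zero _ (sub_ne_zero.mpr (hz t ht)))
  have hint := intervalIntegral.integral_eq_sub_of_hasDerivAt hder hii
  rw [hint, auxG_left, auxG_right (γ a₁) (γ b₁) z n₁ n₂ hu hv hBA, sub_zero]
end

section
/- Let (S, μ) be a measure space with μ a σ-finite nonnegative measure, and f₁, ..., f_p : S → [0,∞] measurable. For a measurable g : S → [0,∞] define its decreasing rearrangement ⟨g|μ⟩ : [0,∞) → [0,∞] by ⟨g|μ⟩(x) = inf{ y ≥ 0 : μ({g > y}) ≤ x }. Then ∫_S f₁(t)⋯f_p(t) dμ(t) ≤ ∫_{[0,∞)} ⟨f₁|μ⟩(x)⋯⟨f_p|μ⟩(x) dx. -/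
open MeasureTheory ENNReal

/-- The decreasing rearrangement (straightening) of `g` along `μ`:
`⟨g|μ⟩(x) = inf { y : μ(g > y) ≤ x }`. -/
noncomputable def rearrangement {S : Type*} [MeasurableSpace S] (μ : Measure S)
    (g : S → ℝ≥0∞) (x : ℝ) : ℝ≥0∞ :=
  sInf {y : ℝ≥0∞ | μ {t | y < g t} ≤ ENNReal.ofReal x}

lemma rearrangement_antitone {S : Type*} [MeasurableSpace S] (μ : Measure S)
    (g : S → ℝ≥0∞) : Antitone (rearrangement μ g) := by
  intro a b hab
  exact sInf_le_sInf fun z hz => le_trans hz (ENNReal.ofReal_le_ofReal hab)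

/-- Key fact: if `ofReal x < μ {g > y}` then `y < ⟨g|μ⟩(x)`. -/
lemma lt_rearrangement {S : Type*} [MeasurableSpace S] (μ : Measure S) {g : S → ℝ≥0∞}
    (hg : Measurable g) {x : ℝ} {y : ℝ≥0∞} (h : ENNReal.ofReal x < μ {t | y < g t}) :
    y < rearrangement μ g x := by
  set T : Set ℝ≥0∞ := {z : ℝ≥0∞ | μ {t | z < g t} ≤ ENNReal.ofReal x} with hT
  have hTne : T.Nonempty := by
    refine ⟨⊤, ?_⟩
    have : {t | (⊤ : ℝ≥0∞) < g t} = ∅ := by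
      ext t; simp
    simp [hT, this]
  obtain ⟨u, hu_anti, hu_tend, hu_mem⟩ := exists_seq_tendsto_sInf hTne (OrderBot.bddBelow T)
  have key : μ {t | sInf T < g t} ≤ ENNReal.ofReal x := by
    have hsub : {t | sInf T < g t} ⊆ ⋃ n, {t | u n < g t} := by
      intro t ht
      obtain ⟨n, hn⟩ := (hu_tend.eventually_lt_const ht).exists
      exact Set.mem_iUnion.2 ⟨n, hn⟩
    have hmono : Monotone fun n => {t | u n < g t} := by
      intro m n hmn t ht
      exact lt_of_le_of_lt (hu_anti hmn) ht
    calc μ {t | sInf T < g t} ≤ μ (⋃ n, {t | u n < g t}) := measure_mono hsub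
      _ = ⨆ n, μ {t | u n < g t} :=
          Directed.measure_iUnion hmono.directed_le
      _ ≤ ENNReal.ofReal x := iSup_le fun n => hu_mem n
  by_contra hle
  push_neg at hle
  have : μ {t | y < g t} ≤ ENNReal.ofReal x := by
    refine le_trans (measure_mono ?_) key
    intro t ht
    exact lt_of_le_of_lt hle ht
  exact absurd this (not_le.2 h)

/-- `volume {x | 0 ≤ x ∧ ofReal x < c} = c`. -/
lemma vol_aux (c : ℝ≥0∞) : volume {x : ℝ | 0 ≤ x ∧ ENNReal.ofReal x < c} = c := by
  rcases eq_or_ne c ⊤ with rfl | hc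
  · have h : {x : ℝ | 0 ≤ x ∧ ENNReal.ofReal x < ⊤} = Set.Ici 0 := by
      ext x; simp [ENNReal.ofReal_lt_top]
    rw [h]; simp
  · have h : {x : ℝ | 0 ≤ x ∧ ENNReal.ofReal x < c} = Set.Ico 0 c.toReal := by
      ext x
      simp only [Set.mem_setOf_eq, Set.mem_Ico, and_congr_right_iff]
      intro hx
      exact ENNReal.ofReal_lt_iff_lt_toReal hx hc
    rw [h, Real.volume_Ico, sub_zero, ENNReal.ofReal_toReal hc]

/-- Fubini for finite products of functions w.r.t. `Measure.pi`. -/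
lemma lintegral_pi_prod : ∀ (n : ℕ) (g : Fin n → ℝ → ℝ≥0∞), (∀ i, Measurable (g i)) →
    ∫⁻ y : Fin n → ℝ, ∏ i, g i (y i) ∂(Measure.pi fun _ => (volume : Measure ℝ))
      = ∏ i, ∫⁻ t, g i t := by
  intro n
  induction n with
  | zero =>
      intro g _
      rw [Measure.pi_of_empty]
      simp
  | succ n ih =>
      intro g hg
      have hmp := (measurePreserving_piFinSuccAbove
        (fun _ : Fin (n + 1) => (volume : Measure ℝ)) 0).symm
      set e := MeasurableEquiv.piFinSuccAbove (fun _ : Fin (n + 1) => ℝ) 0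
      have h1 : ∫⁻ y : Fin (n + 1) → ℝ, ∏ i, g i (y i)
          ∂(Measure.pi fun _ => (volume : Measure ℝ))
          = ∫⁻ z : ℝ × (Fin n → ℝ), ∏ i, g i (e.symm z i)
            ∂((volume : Measure ℝ).prod (Measure.pi fun _ => (volume : Measure ℝ))) := by
        rw [← hmp.lintegral_comp_emb (MeasurableEquiv.measurableEmbedding _)]
      have h2 : ∀ z : ℝ × (Fin n → ℝ), ∏ i, g i (e.symm z i)
          = g 0 z.1 * ∏ j : Fin n, g j.succ (z.2 j) := by
        intro z
        have hcons : e.symm z = Fin.cons z.1 z.2 := by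
          simp [e, MeasurableEquiv.piFinSuccAbove, Fin.insertNth_zero', Fin.consEquiv]
        rw [hcons, Fin.prod_univ_succ]
        simp
      have hmeas : Measurable fun b : Fin n → ℝ => ∏ j : Fin n, g j.succ (b j) :=
        Finset.measurable_prod _ fun j _ => (hg j.succ).comp (measurable_pi_apply j)
      rw [h1]
      simp_rw [h2]
      rw [lintegral_prod_mul (hg 0).aemeasurable hmeas.aemeasurable,
        ih (fun j => g j.succ) (fun j => hg j.succ), Fin.prod_univ_succ]


/-- The layer function. -/
noncomputable def layerG (a : ℝ≥0∞) (y : ℝ) : ℝ≥0∞ :=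
  if 0 ≤ y ∧ ENNReal.ofReal y < a then 1 else 0

lemma layerG_set_meas (a : ℝ≥0∞) :
    MeasurableSet {y : ℝ | 0 ≤ y ∧ ENNReal.ofReal y < a} :=
  measurableSet_Ici.inter (ENNReal.measurable_ofReal measurableSet_Iio)

lemma layerG_eq (a : ℝ≥0∞) : layerG a = ({y : ℝ | 0 ≤ y ∧ ENNReal.ofReal y < a}).indicator
    (1 : ℝ → ℝ≥0∞) := by
  funext y; simp [layerG, Set.indicator_apply]

lemma layerG_lintegral (a : ℝ≥0∞) : ∫⁻ y, layerG a y = a := by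
  rw [layerG_eq a, lintegral_indicator_one (layerG_set_meas a), vol_aux]

lemma layerG_meas (a : ℝ≥0∞) : Measurable (layerG a) := by
  rw [layerG_eq a]
  exact (measurable_const).indicator (layerG_set_meas a)

/-- The generic layer-cake computation. -/
lemma main_aux (p : ℕ) {T : Type*} [MeasurableSpace T] (ρ : Measure T) [SigmaFinite ρ]
    (g : Fin p → T → ℝ≥0∞) (hgm : ∀ i, Measurable (g i)) :
    ∫⁻ t, ∏ i, g i t ∂ρ
      = ∫⁻ y : Fin p → ℝ, ρ {t | ∀ i, 0 ≤ y i ∧ ENNReal.ofReal (y i) < g i t}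
          ∂(Measure.pi fun _ => (volume : Measure ℝ)) := by
  set π : Measure (Fin p → ℝ) := Measure.pi fun _ => (volume : Measure ℝ) with hπ
  have step1 : ∫⁻ t, ∏ i, g i t ∂ρ
      = ∫⁻ t, ∫⁻ y : Fin p → ℝ, ∏ i, layerG (g i t) (y i) ∂π ∂ρ := by
    refine lintegral_congr fun t => ?_
    rw [hπ, lintegral_pi_prod p (fun i => layerG (g i t)) (fun i => layerG_meas _)]
    exact (Finset.prod_congr rfl fun i _ => (layerG_lintegral (g i t)).symm)
  have hFmeas : Measurable (Function.uncurry fun (t : T) (y : Fin p → ℝ) =>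
      ∏ i, layerG (g i t) (y i)) := by
    refine Finset.measurable_prod _ fun i _ => ?_
    have hset : MeasurableSet {z : T × (Fin p → ℝ) |
        0 ≤ z.2 i ∧ ENNReal.ofReal (z.2 i) < g i z.1} := by
      have e1 : MeasurableSet {z : T × (Fin p → ℝ) | 0 ≤ z.2 i} :=
        measurableSet_le measurable_const (measurable_snd.eval)
      have e2 : MeasurableSet {z : T × (Fin p → ℝ) | ENNReal.ofReal (z.2 i) < g i z.1} :=
        measurableSet_lt
          (ENNReal.measurable_ofReal.comp (measurable_snd.eval))
          ((hgm i).comp measurable_fst)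
      exact e1.inter e2
    have : (fun z : T × (Fin p → ℝ) => layerG (g i z.1) (z.2 i))
        = ({z : T × (Fin p → ℝ) | 0 ≤ z.2 i ∧ ENNReal.ofReal (z.2 i) < g i z.1}).indicator
          (1 : T × (Fin p → ℝ) → ℝ≥0∞) := by
      funext z; simp [layerG, Set.indicator_apply]
    exact this ▸ (measurable_const).indicator hset
  have step2 : ∫⁻ t, ∫⁻ y : Fin p → ℝ, ∏ i, layerG (g i t) (y i) ∂π ∂ρ
      = ∫⁻ y : Fin p → ℝ, ∫⁻ t, ∏ i, layerG (g i t) (y i) ∂ρ ∂π :=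
    lintegral_lintegral_swap hFmeas.aemeasurable
  have step3 : ∀ y : Fin p → ℝ, ∫⁻ t, ∏ i, layerG (g i t) (y i) ∂ρ
      = ρ {t | ∀ i, 0 ≤ y i ∧ ENNReal.ofReal (y i) < g i t} := by
    intro y
    have hset : MeasurableSet {t : T | ∀ i, 0 ≤ y i ∧ ENNReal.ofReal (y i) < g i t} := by
      have : {t : T | ∀ i, 0 ≤ y i ∧ ENNReal.ofReal (y i) < g i t}
          = ⋂ i, ({t : T | 0 ≤ y i} ∩ {t : T | ENNReal.ofReal (y i) < g i t}) := by
        ext t; simp [Set.mem_iInter]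
      rw [this]
      exact MeasurableSet.iInter fun i =>
        (MeasurableSet.const _).inter (measurableSet_lt measurable_const (hgm i))
    have heq : ∀ t : T, ∏ i, layerG (g i t) (y i)
        = ({t : T | ∀ i, 0 ≤ y i ∧ ENNReal.ofReal (y i) < g i t}).indicator
          (1 : T → ℝ≥0∞) t := by
      intro t
      simp only [layerG]
      rw [Fintype.prod_boole]
      simp [Set.indicator_apply]
    rw [lintegral_congr heq, lintegral_indicator_one hset]
  rw [step1, step2]
  exact lintegral_congr step3

theorem stmt_11 {S : Type*} [MeasurableSpace S] (μ : Measure S) [SigmaFinite μ]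
    (p : ℕ) (hp : 1 ≤ p) (f : Fin p → S → ℝ≥0∞) (hf : ∀ i, Measurable (f i)) :
    ∫⁻ t, ∏ i : Fin p, f i t ∂μ ≤
      ∫⁻ x in Set.Ici (0 : ℝ), ∏ i : Fin p, rearrangement μ (f i) x := by
  classical
  have hrm : ∀ i, Measurable (rearrangement μ (f i)) :=
    fun i => (rearrangement_antitone μ (f i)).measurable
  rw [main_aux p μ f hf,
    main_aux p (volume.restrict (Set.Ici (0 : ℝ))) (fun i => rearrangement μ (f i)) hrm]
  refine lintegral_mono fun y => ?_
  by_cases hy : ∀ i, 0 ≤ y i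
  · set c := ⨅ i, μ {t | ENNReal.ofReal (y i) < f i t} with hc
    have h1 : μ {t | ∀ i, 0 ≤ y i ∧ ENNReal.ofReal (y i) < f i t} ≤ c :=
      le_iInf fun i => measure_mono fun t ht => (ht i).2
    have h2 : (volume.restrict (Set.Ici (0 : ℝ))) {x : ℝ | ENNReal.ofReal x < c} = c := by
      rw [Measure.restrict_apply' measurableSet_Ici]
      have : {x : ℝ | ENNReal.ofReal x < c} ∩ Set.Ici 0
          = {x : ℝ | 0 ≤ x ∧ ENNReal.ofReal x < c} := by
        ext x; simp [Set.mem_Ici, and_comm]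
      rw [this, vol_aux]
    refine h1.trans ?_
    rw [← h2]
    refine measure_mono fun x hx => ?_
    intro i
    refine ⟨hy i, lt_rearrangement μ (hf i) ?_⟩
    exact lt_of_lt_of_le hx (iInf_le _ i)
  · push_neg at hy
    obtain ⟨i, hi⟩ := hy
    have : {t : S | ∀ j, 0 ≤ y j ∧ ENNReal.ofReal (y j) < f j t} = ∅ := by
      ext t; simp only [Set.mem_setOf_eq, Set.mem_empty_iff_false, iff_false]
      intro ht; exact absurd (ht i).1 (not_le.2 hi)
    simp [this]
end

section
/- For z ∈ ℂ \ (-∞, 0], the principal logarithm admits the integral representation log z = -∫_{-1}^{1} (1 - z)/((1+t) + (1-t)z) dt. -/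
/-!
The integrand is the logarithmic derivative of `g t = (1 + t) + (1 - t) z`. For `t ∈ [-1, 1]`,
`g t` is twice a point of the segment `[1, z]`, so it stays in the slit plane, which is star-convex
about `1`; there `log ∘ g` is a primitive, and the integral equals `log 2 - log (2 z) = -log z`.
-/

open Complex intervalIntegral Set

lemma Complex.mem_slitPlane_of_forall_ofReal_ne {z : ℂ} (hz : ∀ x : ℝ, x ≤ 0 → (x : ℂ) ≠ z) :
    z ∈ slitPlane := by
  rw [mem_slitPlane_iff_not_le_zero, nonpos_iff]
  rintro ⟨hre, him⟩
  exact hz z.re hre (ext rfl him.symm)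

lemma Complex.ofReal_mul_mem_slitPlane {r : ℝ} (hr : 0 < r) {w : ℂ} (hw : w ∈ slitPlane) :
    (r : ℂ) * w ∈ slitPlane := by
  rw [mem_slitPlane_iff] at hw ⊢
  simpa [hr, hr.ne'] using hw

lemma Complex.one_add_add_one_sub_mul_mem_slitPlane {z : ℂ} (hz : z ∈ slitPlane) {t : ℝ}
    (ht : t ∈ Icc (-1) 1) : (1 + t : ℂ) + (1 - t) * z ∈ slitPlane := by
  have hseg : ((1 + t) / 2 : ℝ) • (1 : ℂ) + ((1 - t) / 2 : ℝ) • z ∈ slitPlane :=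
    starConvex_one_slitPlane hz (by linarith [ht.1]) (by linarith [ht.2]) (by ring)
  convert ofReal_mul_mem_slitPlane two_pos hseg using 1
  simp only [real_smul]
  push_cast
  ring

theorem intervalIntegral.integral_div_eq_log_sub_log {g g' : ℝ → ℂ} {a b : ℝ}
    (hg : ∀ t ∈ uIcc a b, HasDerivAt g (g' t) t) (hg' : ContinuousOn g' (uIcc a b))
    (hslit : ∀ t ∈ uIcc a b, g t ∈ slitPlane) :
    ∫ t in a..b, g' t / g t = log (g b) - log (g a) := by
  refine integral_eq_sub_of_hasDerivAt (fun t ht ↦ (hg t ht).clog_real (hslit t ht)) ?_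
  refine (hg'.div (fun t ht ↦ (hg t ht).continuousAt.continuousWithinAt) ?_).intervalIntegrable
  exact fun t ht ↦ slitPlane_ne_zero (hslit t ht)

theorem stmt_19 (z : ℂ) (hz : ∀ x : ℝ, x ≤ 0 → (x : ℂ) ≠ z) :
    Complex.log z = -∫ t in (-1 : ℝ)..1, (1 - z) / (((1 : ℝ) + t) + ((1 : ℝ) - t) * z) := by
  have hslit := mem_slitPlane_of_forall_ofReal_ne hz
  have hderiv (t : ℝ) :
      HasDerivAt (fun s : ℝ ↦ ((1 : ℝ) + s : ℂ) + ((1 : ℝ) - s) * z) (1 - z) t := by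
    have hs : HasDerivAt (fun s : ℝ ↦ (s : ℂ)) 1 t := (hasDerivAt_id t).ofReal_comp
    simpa [sub_eq_add_neg] using (hs.const_add _).fun_add ((hs.const_sub _).mul_const z)
  rw [integral_div_eq_log_sub_log (fun t _ ↦ hderiv t) continuousOn_const]
  · have h2 : (1 + (-1 : ℝ) : ℂ) + (1 - (-1 : ℝ)) * z = (2 : ℝ) * z := by push_cast; ring
    simp only [ofReal_one, h2, log_ofReal_mul two_pos (slitPlane_ne_zero hslit)]
    norm_num
  · intro t ht
    rw [uIcc_of_le (by norm_num)] at ht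
    simpa using one_add_add_one_sub_mul_mem_slitPlane hslit ht
end
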